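/- arXiv:2401.15815 — 6 statements merged into one kernel-verified Lean document; each statement's English description precedes it below -/
import Mathlib

section
/- Let λ ≥ 0, r > 0, M ≥ 2, α^{(j)} = λ/(r²(2j−1)) − (2j−1)/2 for j = 1,…,M, and let j₀ = max { j ∈ {1,…,M} : α^{(j)} ≥ −1 }. If j₀ ≥ 2 then α^{(j)} ≥ 1 for all j = 1,…,j₀−1. -/
theorem stmt_2 (lam r : ℝ) (hlam : 0 ≤ lam) (hr : 0 < r) (M : ℕ) (hM : 2 ≤ M)
    (α : ℕ → ℝ) (hα : ∀ j : ℕ, α j = lam / (r ^ 2 * (2 * j - 1)) - (2 * j - 1) / 2)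
    (j₀ : ℕ) (hj₀ : IsGreatest {j : ℕ | 1 ≤ j ∧ j ≤ M ∧ α j ≥ -1} j₀)
    (h2 : 2 ≤ j₀) :
    ∀ j : ℕ, 1 ≤ j → j ≤ j₀ - 1 → α j ≥ 1 := by
  intro j hj1 hj2
  have hj' : j + 1 ≤ j₀ := by omega
  have hα0 := hj₀.1.2.2
  rw [hα] at hα0 ⊢
  have hj1r : (1:ℝ) ≤ (j:ℝ) := by exact_mod_cast hj1
  have hjr : (j:ℝ) + 1 ≤ (j₀:ℝ) := by exact_mod_cast hj'
  have hr2 : (0:ℝ) < r ^ 2 := by positivity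
  have hd : (0:ℝ) < r ^ 2 * (2 * (j:ℝ) - 1) := by nlinarith
  have hd0 : (0:ℝ) < r ^ 2 * (2 * (j₀:ℝ) - 1) := by nlinarith
  have h1 : ((2 * (j₀:ℝ) - 1) / 2 - 1) * (r ^ 2 * (2 * (j₀:ℝ) - 1)) ≤ lam := by
    have := (le_div_iff₀ hd0).mp (by linarith : (2 * (j₀:ℝ) - 1) / 2 - 1 ≤ lam / (r ^ 2 * (2 * j₀ - 1)))
    linarith
  rw [ge_iff_le, le_sub_iff_add_le, le_div_iff₀ hd]
  nlinarith [mul_pos hr2 (by linarith : (0:ℝ) < 2 * (j:ℝ) - 1), sq_nonneg r,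
    mul_le_mul_of_nonneg_left hjr (le_of_lt hr2)]
end

section
/- Let 0 < p ≤ 2M/(2M+1), σ > 0, λ̄ = ln((1−p)/(p/(2M))), and define for γ > 0 with j the index from the formula j = min{M, ⌊(1/2)√(1+λ̄/γ²)⌋+1} the function ρ(γ) = p/(2M) + ((M−j)/M)p·erf(γ) − (p/(2M))·erf(α γ) + (1−p)·erf((2j−1+α)γ) where α = λ̄/(2γ²(2j−1)) − (2j−1)/2. Then lim_{γ→0⁺} ρ(γ) = 1 − p and lim_{γ→∞} ρ(γ) = 1. -/
noncomputable def erf (z : ℝ) : ℝ :=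
  (2 / Real.sqrt Real.pi) * ∫ t in (0:ℝ)..z, Real.exp (-t ^ 2)

lemma integrable_gauss : MeasureTheory.Integrable (fun t : ℝ => Real.exp (-t ^ 2)) := by
  have := integrable_exp_neg_mul_sq (b := 1) one_pos
  simpa using this

lemma erf_continuous : Continuous erf := by
  exact continuous_const.mul (integrable_gauss.continuous_primitive 0)

lemma erf_zero : erf 0 = 0 := by simp [erf]

lemma erf_tendsto_atTop : Filter.Tendsto erf Filter.atTop (nhds 1) := by
  have h := MeasureTheory.intervalIntegral_tendsto_integral_Ioi 0
    integrable_gauss.integrableOn Filter.tendsto_id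
  have hval : ∫ x in Set.Ioi (0:ℝ), Real.exp (-x ^ 2) = Real.sqrt Real.pi / 2 := by
    have := integral_gaussian_Ioi 1
    simpa using this
  rw [hval] at h
  have := h.const_mul (2 / Real.sqrt Real.pi)
  have hpi : Real.sqrt Real.pi ≠ 0 := by positivity
  have heq : 2 / Real.sqrt Real.pi * (Real.sqrt Real.pi / 2) = 1 := by
    field_simp
  rw [heq] at this
  exact this

lemma erf_neg (z : ℝ) : erf (-z) = - erf z := by
  unfold erf
  rw [show ∫ t in (0:ℝ)..(-z), Real.exp (-t ^ 2)
      = ∫ t in (0:ℝ)..(-z), Real.exp (-(-t) ^ 2) by simp,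
    intervalIntegral.integral_comp_neg (fun t => Real.exp (-t ^ 2))]
  simp only [neg_neg, neg_zero]
  rw [intervalIntegral.integral_symm]
  ring

lemma erf_tendsto_atBot : Filter.Tendsto erf Filter.atBot (nhds (-1)) := by
  have : Filter.Tendsto (fun z : ℝ => - erf (-z)) Filter.atBot (nhds (-1)) := by
    exact (erf_tendsto_atTop.comp Filter.tendsto_neg_atBot_atTop).neg
  refine this.congr fun z => by rw [erf_neg, neg_neg]

open Filter in
lemma lin_tendsto_zero (r : ℝ) :
    Tendsto (fun γ : ℝ => r * γ) (nhdsWithin 0 (Set.Ioi 0)) (nhds 0) := by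
  have hc : Continuous (fun γ : ℝ => r * γ) := continuous_const.mul continuous_id
  have := hc.tendsto 0
  simpa using this.mono_left nhdsWithin_le_nhds

set_option maxHeartbeats 1600000 in
theorem stmt_5 (M : ℕ) (hM : 1 ≤ M) (p : ℝ) (hp : 0 < p)
    (hple : p ≤ 2 * M / (2 * M + 1))
    (lamb : ℝ) (hlamb : lamb = Real.log ((1 - p) / (p / (2 * M))))
    (j : ℝ → ℕ)
    (hj : ∀ γ : ℝ, j γ = min M (Nat.floor ((1 / 2) * Real.sqrt (1 + lamb / γ ^ 2)) + 1))
    (α : ℝ → ℝ)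
    (hα : ∀ γ : ℝ, α γ =
      lamb / (2 * γ ^ 2 * (2 * (j γ : ℝ) - 1)) - (2 * (j γ : ℝ) - 1) / 2)
    (ρ : ℝ → ℝ)
    (hρ : ∀ γ : ℝ, ρ γ =
      p / (2 * M) + (((M : ℝ) - (j γ : ℝ)) / M) * p * erf γ
        - (p / (2 * M)) * erf (α γ * γ)
        + (1 - p) * erf ((2 * (j γ : ℝ) - 1 + α γ) * γ)) :
    Filter.Tendsto ρ (nhdsWithin 0 (Set.Ioi 0)) (nhds (1 - p)) ∧
    Filter.Tendsto ρ Filter.atTop (nhds 1) := by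
  have hM0 : (0:ℝ) < M := by exact_mod_cast hM
  have hM1 : (1:ℝ) ≤ M := by exact_mod_cast hM
  have hp2M : 0 < p / (2 * M) := by positivity
  have hple' : p * (2 * M + 1) ≤ 2 * M := by
    rw [le_div_iff₀ (by positivity)] at hple
    exact hple
  have h1p : 0 < 1 - p := by nlinarith
  have hratio : 1 ≤ (1 - p) / (p / (2 * M)) := by
    rw [le_div_iff₀ hp2M, one_mul, div_le_iff₀ (by positivity)]
    nlinarith
  have hl0 : 0 ≤ lamb := hlamb ▸ Real.log_nonneg hratio
  have hcne : (2 * (M:ℝ) - 1) ≠ 0 := by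
    intro h; nlinarith
  constructor
  · -- γ → 0⁺
    rcases eq_or_lt_of_le hl0 with hl | hl
    · -- lamb = 0 case
      have hx1 : (1 - p) / (p / (2 * M)) = 1 := by
        have h0 : Real.log ((1 - p) / (p / (2 * M))) = 0 := by rw [← hlamb, ← hl]
        rcases Real.log_eq_zero.mp h0 with h | h | h
        · exact absurd h (div_pos h1p hp2M).ne'
        · exact h
        · nlinarith [div_pos h1p hp2M]
      have hpeq : 1 - p = p / (2 * M) := by
        rw [div_eq_one_iff_eq hp2M.ne'] at hx1
        exact hx1
      have hjγ : ∀ γ : ℝ, j γ = 1 := by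
        intro γ
        rw [hj γ, ← hl]
        have h12 : (1:ℝ)/2 * Real.sqrt (1 + 0 / γ^2) = 1/2 := by
          rw [zero_div, add_zero, Real.sqrt_one, mul_one]
        rw [h12, Nat.floor_eq_zero.mpr (by norm_num)]
        simpa using min_eq_right hM
      have hαγ : ∀ γ : ℝ, α γ = -(1/2) := by
        intro γ
        rw [hα γ, hjγ γ, ← hl]
        norm_num
      have hcont : Continuous (fun γ : ℝ => p / (2 * M) + (((M : ℝ) - 1) / M) * p * erf γ
          - (p / (2 * M)) * erf (-(1/2) * γ) + (1 - p) * erf ((1/2) * γ)) := by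
        exact ((continuous_const.add
          (continuous_const.mul erf_continuous)).sub
          (continuous_const.mul (erf_continuous.comp (continuous_const.mul continuous_id)))).add
          (continuous_const.mul (erf_continuous.comp (continuous_const.mul continuous_id)))
      have hT : Filter.Tendsto (fun γ : ℝ => p / (2 * M) + (((M : ℝ) - 1) / M) * p * erf γ
          - (p / (2 * M)) * erf (-(1/2) * γ) + (1 - p) * erf ((1/2) * γ))
          (nhdsWithin 0 (Set.Ioi 0)) (nhds (1 - p)) := by
        have := (hcont.tendsto 0).mono_left
          (nhdsWithin_le_nhds : nhdsWithin (0:ℝ) (Set.Ioi 0) ≤ nhds 0)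
        simpa [erf_zero, ← hpeq] using this
      refine hT.congr fun γ => ?_
      rw [hρ γ, hjγ γ, hαγ γ]
      norm_num
    · -- 0 < lamb case
      set δ : ℝ := Real.sqrt lamb / (2 * M) with hδ
      have hδpos : 0 < δ := by
        have : 0 < Real.sqrt lamb := Real.sqrt_pos.mpr hl
        positivity
      have hmem : Set.Ioo (0:ℝ) δ ∈ nhdsWithin 0 (Set.Ioi 0) :=
        Ioo_mem_nhdsGT_of_mem ⟨le_refl 0, hδpos⟩
      have ht1 : Filter.Tendsto
          (fun γ : ℝ => (lamb / (2 * (2*(M:ℝ)-1))) * γ⁻¹ + (-((2*(M:ℝ)-1)/2)) * γ)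
          (nhdsWithin 0 (Set.Ioi 0)) Filter.atTop :=
        (tendsto_inv_nhdsGT_zero.const_mul_atTop
          (div_pos hl (by nlinarith))).atTop_add (lin_tendsto_zero _)
      have ht2 : Filter.Tendsto
          (fun γ : ℝ => (lamb / (2 * (2*(M:ℝ)-1))) * γ⁻¹ + ((2*(M:ℝ)-1)/2) * γ)
          (nhdsWithin 0 (Set.Ioi 0)) Filter.atTop :=
        (tendsto_inv_nhdsGT_zero.const_mul_atTop
          (div_pos hl (by nlinarith))).atTop_add (lin_tendsto_zero _)
      have hF : Filter.Tendsto
          (fun γ : ℝ => p / (2 * (M:ℝ))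
            - (p / (2 * M)) * erf ((lamb / (2 * (2*(M:ℝ)-1))) * γ⁻¹ + (-((2*(M:ℝ)-1)/2)) * γ)
            + (1 - p) * erf ((lamb / (2 * (2*(M:ℝ)-1))) * γ⁻¹ + ((2*(M:ℝ)-1)/2) * γ))
          (nhdsWithin 0 (Set.Ioi 0))
          (nhds (p / (2 * M) - (p / (2 * M)) * 1 + (1 - p) * 1)) :=
        (tendsto_const_nhds.sub ((erf_tendsto_atTop.comp ht1).const_mul _)).add
          ((erf_tendsto_atTop.comp ht2).const_mul _)
      have hval : p / (2 * (M:ℝ)) - (p / (2 * M)) * 1 + (1 - p) * 1 = 1 - p := by ring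
      rw [hval] at hF
      refine hF.congr' (Filter.eventuallyEq_of_mem hmem fun γ hγ => ?_)
      obtain ⟨hγ0, hγδ⟩ := hγ
      have hγne : γ ≠ 0 := hγ0.ne'
      have hγ2 : 4 * (M:ℝ)^2 * γ^2 < lamb := by
        have hδ2 : δ^2 = lamb / (4 * (M:ℝ)^2) := by
          rw [hδ, div_pow, Real.sq_sqrt hl.le]
          ring_nf
        have hlt : γ^2 < δ^2 := by nlinarith
        rw [hδ2, lt_div_iff₀ (by positivity)] at hlt
        nlinarith
      have hjM : j γ = M := by
        rw [hj γ]
        refine min_eq_left ?_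
        have hdivle : 4 * (M:ℝ)^2 ≤ lamb / γ^2 := by
          rw [le_div_iff₀ (by positivity)]
          nlinarith
        have hsq : (2 * (M:ℝ)) ≤ Real.sqrt (1 + lamb / γ ^ 2) :=
          Real.le_sqrt_of_sq_le (by nlinarith)
        have h1 : (M : ℝ) ≤ 1/2 * Real.sqrt (1 + lamb / γ^2) := by linarith
        calc M ≤ ⌊(1:ℝ)/2 * Real.sqrt (1 + lamb / γ^2)⌋₊ := Nat.le_floor h1
          _ ≤ ⌊(1:ℝ)/2 * Real.sqrt (1 + lamb / γ^2)⌋₊ + 1 := Nat.le_succ _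
      have e1 : α γ * γ =
          (lamb / (2 * (2*(M:ℝ)-1))) * γ⁻¹ + (-((2*(M:ℝ)-1)/2)) * γ := by
        rw [hα γ, hjM]
        field_simp [hγne, hcne]
        ring
      have e2 : (2 * ((M:ℕ):ℝ) - 1 + α γ) * γ =
          (lamb / (2 * (2*(M:ℝ)-1))) * γ⁻¹ + ((2*(M:ℝ)-1)/2) * γ := by
        rw [hα γ, hjM]
        field_simp [hγne, hcne]
        ring
      rw [hρ γ, hjM, e1, e2]
      simp
  · -- γ → ∞
    have ht1 : Filter.Tendsto (fun γ : ℝ => (lamb/2) * γ⁻¹ + (-(1/2)) * γ)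
        Filter.atTop Filter.atBot := by
      have h1 : Filter.Tendsto (fun γ : ℝ => (lamb/2) * γ⁻¹) Filter.atTop (nhds 0) := by
        simpa using tendsto_inv_atTop_zero.const_mul (lamb/2)
      exact h1.add_atBot (Filter.tendsto_id.const_mul_atTop_of_neg (by norm_num))
    have ht2 : Filter.Tendsto (fun γ : ℝ => (lamb/2) * γ⁻¹ + (1/2) * γ)
        Filter.atTop Filter.atTop := by
      have h1 : Filter.Tendsto (fun γ : ℝ => (lamb/2) * γ⁻¹) Filter.atTop (nhds 0) := by
        simpa using tendsto_inv_atTop_zero.const_mul (lamb/2)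
      exact h1.add_atTop (Filter.tendsto_id.const_mul_atTop (by norm_num))
    have hF : Filter.Tendsto
        (fun γ : ℝ => p / (2 * (M:ℝ)) + (((M:ℝ) - 1) / M) * p * erf γ
          - (p / (2 * M)) * erf ((lamb/2) * γ⁻¹ + (-(1/2)) * γ)
          + (1 - p) * erf ((lamb/2) * γ⁻¹ + (1/2) * γ))
        Filter.atTop
        (nhds (p / (2 * M) + (((M:ℝ) - 1) / M) * p * 1
          - (p / (2 * M)) * (-1) + (1 - p) * 1)) :=
      ((tendsto_const_nhds.add ((erf_tendsto_atTop).const_mul _)).sub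
        ((erf_tendsto_atBot.comp ht1).const_mul _)).add
        ((erf_tendsto_atTop.comp ht2).const_mul _)
    have hval : p / (2 * (M:ℝ)) + (((M:ℝ) - 1) / M) * p * 1
        - (p / (2 * M)) * (-1) + (1 - p) * 1 = 1 := by
      field_simp
      ring
    rw [hval] at hF
    refine hF.congr' ?_
    filter_upwards [Filter.eventually_ge_atTop (max 1 (lamb + 1))] with γ hγ
    have hγ1 : (1:ℝ) ≤ γ := le_trans (le_max_left _ _) hγ
    have hγl : lamb + 1 ≤ γ := le_trans (le_max_right _ _) hγ
    have hγ0 : 0 < γ := by linarith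
    have hγne : γ ≠ 0 := hγ0.ne'
    have hj1 : j γ = 1 := by
      rw [hj γ]
      have h2 : Real.sqrt (1 + lamb / γ^2) < 2 := by
        rw [Real.sqrt_lt' (by norm_num)]
        have : lamb / γ^2 < 3 := by
          rw [div_lt_iff₀ (by positivity)]
          nlinarith
        linarith
      rw [Nat.floor_eq_zero.mpr (by linarith)]
      simpa using min_eq_right hM
    have e1 : α γ * γ = (lamb/2) * γ⁻¹ + (-(1/2)) * γ := by
      rw [hα γ, hj1]
      push_cast
      field_simp [hγne]
      ring
    have e2 : (2 * ((1:ℕ):ℝ) - 1 + α γ) * γ = (lamb/2) * γ⁻¹ + (1/2) * γ := by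
      rw [hα γ, hj1]
      push_cast
      field_simp [hγne]
      ring
    rw [hρ γ, hj1, e1, e2]
    norm_num
end

section
/- Fix η > 0, M ≥ 1, 0 < p < 2M/(2M+1), and let λ̄* = ln((1−p)/(p/(2M))) > 0. Define h(λ̄) = (1−p)e^{−(λ̄/(2η)+η/2)²} − (p/(2M))e^{−(λ̄/(2η)−η/2)²} for λ̄ ≥ 0. Then h(λ̄) > 0 for 0 ≤ λ̄ < λ̄*, h(λ̄*) = 0, and h(λ̄) < 0 for λ̄ > λ̄*. -/
theorem stmt_8 (M : ℕ) (hM : 1 ≤ M) (η p : ℝ) (hη : 0 < η) (hp : 0 < p)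
    (hplt : p < 2 * M / (2 * M + 1))
    (lamb : ℝ) (hlamb : lamb = Real.log ((1 - p) / (p / (2 * M))))
    (hlpos : 0 < lamb)
    (h : ℝ → ℝ)
    (hh : ∀ l : ℝ, h l =
      (1 - p) * Real.exp (-(l / (2 * η) + η / 2) ^ 2)
        - (p / (2 * M)) * Real.exp (-(l / (2 * η) - η / 2) ^ 2)) :
    (∀ l : ℝ, 0 ≤ l → l < lamb → 0 < h l) ∧ h lamb = 0 ∧
      (∀ l : ℝ, lamb < l → h l < 0) := by
  have hM' : (0:ℝ) < 2 * M := by positivity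
  have hc : 0 < p / (2 * M) := div_pos hp hM'
  have hMd : (0:ℝ) < 2 * M + 1 := by positivity
  have hp1 : p < 1 := lt_of_lt_of_le hplt (by
    rw [div_le_one hMd]; linarith)
  have hA : 0 < 1 - p := by linarith
  have hexp : Real.exp lamb = (1 - p) / (p / (2 * M)) := by
    rw [hlamb, Real.exp_log (div_pos hA hc)]
  have key : ∀ l : ℝ, h l =
      Real.exp (-(l / (2 * η)) ^ 2 - (η / 2) ^ 2 - l / 2) *
        ((1 - p) - (p / (2 * M)) * Real.exp l) := by
    intro l
    have e1 : -(l / (2 * η) + η / 2) ^ 2 =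
        (-(l / (2 * η)) ^ 2 - (η / 2) ^ 2 - l / 2) := by
      field_simp; ring
    have e2 : -(l / (2 * η) - η / 2) ^ 2 =
        (-(l / (2 * η)) ^ 2 - (η / 2) ^ 2 - l / 2) + l := by
      field_simp; ring
    rw [hh l, e1, e2, Real.exp_add]; ring
  have hsign : ∀ l : ℝ, (1 - p) - (p / (2 * M)) * Real.exp l
      = (p / (2 * M)) * (Real.exp lamb - Real.exp l) := by
    intro l
    rw [hexp]
    field_simp
  refine ⟨?_, ?_, ?_⟩
  · intro l _ hlt
    rw [key l, hsign l]
    exact mul_pos (Real.exp_pos _)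
      (mul_pos hc (sub_pos.mpr (Real.exp_lt_exp.mpr hlt)))
  · rw [key lamb, hsign lamb]; simp
  · intro l hlt
    rw [key l, hsign l]
    have : Real.exp lamb - Real.exp l < 0 :=
      sub_neg.mpr (Real.exp_lt_exp.mpr hlt)
    exact mul_neg_of_pos_of_neg (Real.exp_pos _) (mul_neg_of_pos_of_neg hc this)
end

section
/- Let M ≥ 1, 0 < p < 2M/(2M+1), σ > 0, λ̄ = ln((1−p)/(p/(2M))) > 0, γ > 0, j = min{M, ⌊(1/2)√(1+λ̄/γ²)⌋+1}. Then the derivative of ρ(γ) (the level success probability of the L0-regularized Babai point) with respect to γ, on each interval where j is constant, equals (2/√π)[((M−j)/M)p e^{−γ²} + (1−p)(2j−1)e^{−(λ̄/(2(2j−1)γ) + (2j−1)γ/2)²}], which is strictly positive; hence ρ is strictly increasing on each such interval. -/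
open Real

lemma hasDerivAt_erf (z : ℝ) : HasDerivAt erf (2 / √π * exp (-z ^ 2)) z := by
  have hc : Continuous fun t : ℝ => exp (-t ^ 2) := by fun_prop
  exact (intervalIntegral.integral_hasDerivAt_right (hc.intervalIntegrable 0 z)
    hc.aestronglyMeasurable.stronglyMeasurableAtFilter hc.continuousAt).const_mul _

lemma hasDerivAt_erf_comp {f : ℝ → ℝ} {f' x : ℝ} (hf : HasDerivAt f f' x) :
    HasDerivAt (fun y => erf (f y)) (2 / √π * exp (-f x ^ 2) * f') x :=
  (hasDerivAt_erf (f x)).comp x hf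

lemma sq_sub_eq_sq_add_sub {lam a γ : ℝ} (ha : a ≠ 0) (hγ : γ ≠ 0) :
    (lam / (2 * a * γ) - a * γ / 2) ^ 2 = (lam / (2 * a * γ) + a * γ / 2) ^ 2 - lam := by
  field_simp
  ring

lemma hasDerivAt_mul_erf_add_sub_mul_erf_sub {lam a B C γ : ℝ} (ha : a ≠ 0) (hγ : γ ≠ 0)
    (hBC : B * exp lam = C) :
    HasDerivAt
      (fun x => C * erf (lam / (2 * a * x) + a * x / 2) - B * erf (lam / (2 * a * x) - a * x / 2))
      (2 / √π * (C * a * exp (-(lam / (2 * a * γ) + a * γ / 2) ^ 2))) γ := by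
  have hs : HasDerivAt (fun x => lam / (2 * a * x)) (-lam / (2 * a * γ ^ 2)) γ := by
    have hlin : HasDerivAt (fun x => 2 * a * x) (2 * a) γ := by
      simpa using (hasDerivAt_id γ).const_mul (2 * a)
    refine ((hasDerivAt_const γ lam).div hlin (by positivity)).congr_deriv ?_
    field_simp
    ring
  have ht : HasDerivAt (fun x => a * x / 2) (a / 2) γ := by
    simpa using ((hasDerivAt_id γ).const_mul a).div_const 2
  have hweights : B * exp (-(lam / (2 * a * γ) - a * γ / 2) ^ 2)
      = C * exp (-(lam / (2 * a * γ) + a * γ / 2) ^ 2) := by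
    rw [sq_sub_eq_sq_add_sub ha hγ, neg_sub, sub_eq_neg_add, exp_add, ← hBC]
    ring
  refine (((hasDerivAt_erf_comp (hs.fun_add ht)).const_mul C).fun_sub
    ((hasDerivAt_erf_comp (hs.fun_sub ht)).const_mul B)).congr_deriv ?_
  linear_combination (2 / √π * (a / 2 + lam / (2 * a * γ ^ 2))) * hweights

lemma strictMonoOn_of_hasDerivAt_pos {f f' : ℝ → ℝ} {s : Set ℝ} (hconv : Convex ℝ s)
    (hf : ∀ x ∈ s, HasDerivAt f (f' x) x) (hpos : ∀ x ∈ s, 0 < f' x) :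
    StrictMonoOn f s :=
  strictMonoOn_of_hasDerivWithinAt_pos hconv
    (fun x hx => (hf x hx).continuousAt.continuousWithinAt)
    (fun x hx => (hf x (interior_subset hx)).hasDerivWithinAt)
    (fun x hx => hpos x (interior_subset hx))

theorem stmt_9_general (M : ℕ) (p : ℝ) (hp : 0 < p)
    (hplt : p < 2 * M / (2 * M + 1))
    (lamb : ℝ) (hlamb : lamb = Real.log ((1 - p) / (p / (2 * M))))
    (j₀ : ℕ) (hj₀ : 1 ≤ j₀) (hj₀M : j₀ ≤ M)
    (ρ : ℝ → ℝ)
    (hρ : ∀ γ : ℝ, ρ γ =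
      p / (2 * M) + (((M : ℝ) - (j₀ : ℝ)) / M) * p * erf γ
        - (p / (2 * M)) * erf (lamb / (2 * (2 * (j₀ : ℝ) - 1) * γ) - (2 * (j₀ : ℝ) - 1) * γ / 2)
        + (1 - p) * erf (lamb / (2 * (2 * (j₀ : ℝ) - 1) * γ) + (2 * (j₀ : ℝ) - 1) * γ / 2))
    (D : ℝ → ℝ)
    (hD : ∀ γ : ℝ, D γ = (2 / Real.sqrt Real.pi) *
      ((((M : ℝ) - (j₀ : ℝ)) / M) * p * Real.exp (-γ ^ 2)
        + (1 - p) * (2 * (j₀ : ℝ) - 1) *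
          Real.exp (-(lamb / (2 * (2 * (j₀ : ℝ) - 1) * γ) + (2 * (j₀ : ℝ) - 1) * γ / 2) ^ 2))) :
    (∀ γ : ℝ, 0 < γ → HasDerivAt ρ (D γ) γ ∧ 0 < D γ) ∧
      StrictMonoOn ρ (Set.Ioi 0) := by
  have hj : (1 : ℝ) ≤ j₀ := by exact_mod_cast hj₀
  have hjM : (j₀ : ℝ) ≤ M := by exact_mod_cast hj₀M
  have hp1 : p < 1 := hplt.trans ((div_lt_one (by linarith)).2 (by linarith))
  have hM : (0 : ℝ) < M := by linarith
  have hB : 0 < p / (2 * M) := by positivity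
  have hBC : p / (2 * M) * exp lamb = 1 - p := by
    rw [hlamb, exp_log (div_pos (by linarith) hB)]
    field_simp
  set a : ℝ := 2 * (j₀ : ℝ) - 1
  have key : ∀ γ : ℝ, 0 < γ → HasDerivAt ρ (D γ) γ ∧ 0 < D γ := by
    intro γ hγ
    have hderiv := ((hasDerivAt_const γ (p / (2 * M))).fun_add
      ((hasDerivAt_erf γ).const_mul ((((M : ℝ) - j₀) / M) * p))).fun_add
      (hasDerivAt_mul_erf_add_sub_mul_erf_sub (a := a) (by linarith) hγ.ne' hBC)
    have hρ' : ρ = fun x => p / (2 * M) + (((M : ℝ) - j₀) / M) * p * erf x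
        + ((1 - p) * erf (lamb / (2 * a * x) + a * x / 2)
          - p / (2 * M) * erf (lamb / (2 * a * x) - a * x / 2)) :=
      funext fun x => by rw [hρ]; ring
    have hA : 0 ≤ ((M : ℝ) - j₀) / M * p := by
      have : (0 : ℝ) ≤ M - j₀ := by linarith
      positivity
    have hC : 0 < (1 - p) * a := mul_pos (by linarith) (by linarith)
    refine ⟨hρ' ▸ hderiv.congr_deriv (by rw [hD]; ring), ?_⟩
    rw [hD]
    exact mul_pos (by positivity)
      (add_pos_of_nonneg_of_pos (mul_nonneg hA (exp_pos _).le) (mul_pos hC (exp_pos _)))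
  exact ⟨key, strictMonoOn_of_hasDerivAt_pos (convex_Ioi 0)
    (fun x hx => (key x hx).1) (fun x hx => (key x hx).2)⟩

/-- On each interval where the index `j` is constant (so the formula for `ρ` takes the
piecewise form below with a fixed `j₀`), the derivative of `ρ` is given by the stated
expression, is strictly positive, and hence `ρ` is strictly increasing there. -/
theorem stmt_9 (M : ℕ) (hM : 1 ≤ M) (p : ℝ) (hp : 0 < p)
    (hplt : p < 2 * M / (2 * M + 1))
    (lamb : ℝ) (hlamb : lamb = Real.log ((1 - p) / (p / (2 * M))))
    (j₀ : ℕ) (hj₀ : 1 ≤ j₀) (hj₀M : j₀ ≤ M)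
    (ρ : ℝ → ℝ)
    (hρ : ∀ γ : ℝ, ρ γ =
      p / (2 * M) + (((M : ℝ) - (j₀ : ℝ)) / M) * p * erf γ
        - (p / (2 * M)) * erf (lamb / (2 * (2 * (j₀ : ℝ) - 1) * γ) - (2 * (j₀ : ℝ) - 1) * γ / 2)
        + (1 - p) * erf (lamb / (2 * (2 * (j₀ : ℝ) - 1) * γ) + (2 * (j₀ : ℝ) - 1) * γ / 2))
    (D : ℝ → ℝ)
    (hD : ∀ γ : ℝ, D γ = (2 / Real.sqrt Real.pi) *
      ((((M : ℝ) - (j₀ : ℝ)) / M) * p * Real.exp (-γ ^ 2)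
        + (1 - p) * (2 * (j₀ : ℝ) - 1) *
          Real.exp (-(lamb / (2 * (2 * (j₀ : ℝ) - 1) * γ) + (2 * (j₀ : ℝ) - 1) * γ / 2) ^ 2))) :
    (∀ γ : ℝ, 0 < γ → HasDerivAt ρ (D γ) γ ∧ 0 < D γ) ∧
      StrictMonoOn ρ (Set.Ioi 0) :=
  stmt_9_general M p hp hplt lamb hlamb j₀ hj₀ hj₀M ρ hρ D hD
end

section
/- With the notation of the previous statement, the derivative ρ'(γ) is also continuous at each breakpoint γ^{(i)}: the identity ((i−1)/M)p e^{−(γ^{(i)})²} + (1−p)(2M−2i+1)e^{−(2(M−i)γ^{(i)})²} = (i/M)p e^{−(γ^{(i)})²} + (1−p)(2M−2i−1)e^{−(2(M−i)γ^{(i)})²} holds, which is equivalent to e^{−(γ^{(i)})²} = ((1−p)/(p/(2M))) e^{−(2(M−i)γ^{(i)})²}. -/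
theorem stmt_11 (M : ℕ) (hM : 2 ≤ M) (p : ℝ) (hp : 0 < p)
    (hplt : p < 2 * M / (2 * M + 1))
    (lamb : ℝ) (hlamb : lamb = Real.log ((1 - p) / (p / (2 * M))))
    (γi : ℕ → ℝ)
    (hγi : ∀ i : ℕ, γi i =
      Real.sqrt (lamb / ((2 * ((M : ℝ) - i + 1) - 1) * (2 * ((M : ℝ) - i + 1) - 3)))) :
    ∀ i : ℕ, 1 ≤ i → i ≤ M - 1 →
      ((((i : ℝ) - 1) / M) * p * Real.exp (-(γi i) ^ 2)
          + (1 - p) * (2 * (M : ℝ) - 2 * i + 1) * Real.exp (-(2 * ((M : ℝ) - i) * γi i) ^ 2)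
        = ((i : ℝ) / M) * p * Real.exp (-(γi i) ^ 2)
          + (1 - p) * (2 * (M : ℝ) - 2 * i - 1) * Real.exp (-(2 * ((M : ℝ) - i) * γi i) ^ 2)) ∧
      ((((i : ℝ) - 1) / M) * p * Real.exp (-(γi i) ^ 2)
          + (1 - p) * (2 * (M : ℝ) - 2 * i + 1) * Real.exp (-(2 * ((M : ℝ) - i) * γi i) ^ 2)
        = ((i : ℝ) / M) * p * Real.exp (-(γi i) ^ 2)
          + (1 - p) * (2 * (M : ℝ) - 2 * i - 1) * Real.exp (-(2 * ((M : ℝ) - i) * γi i) ^ 2)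
        ↔ Real.exp (-(γi i) ^ 2)
          = ((1 - p) / (p / (2 * M))) * Real.exp (-(2 * ((M : ℝ) - i) * γi i) ^ 2)) := by
  intro i hi1 hi2
  have hM0 : (0:ℝ) < M := by positivity
  have hM2 : (2:ℝ) ≤ M := by exact_mod_cast hM
  have hiM : (i:ℝ) ≤ (M:ℝ) - 1 := by
    have : i + 1 ≤ M := by omega
    have := (Nat.cast_le (α := ℝ)).mpr this
    push_cast at this; linarith
  have hp1 : p < 1 := by
    have h1 : 2 * (M:ℝ) / (2 * M + 1) < 1 := by
      rw [div_lt_one (by linarith)]; linarith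
    linarith
  have hkey : p * (2 * (M:ℝ) + 1) < 2 * M := by
    have h := (lt_div_iff₀ (by linarith : (0:ℝ) < 2 * M + 1)).mp hplt
    linarith
  have hR : 1 < (1 - p) / (p / (2 * M)) := by
    rw [lt_div_iff₀ (by positivity), one_mul, div_lt_iff₀ (by linarith : (0:ℝ) < 2 * M)]
    nlinarith
  have hlamb0 : 0 ≤ lamb := le_of_lt (hlamb ▸ Real.log_pos hR)
  have hexp : Real.exp lamb = (1 - p) / (p / (2 * M)) := by
    rw [hlamb, Real.exp_log (by linarith)]
  set c : ℝ := 2 * ((M:ℝ) - i) with hc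
  have hc2 : 2 ≤ c := by simp only [hc]; linarith
  have hD : 0 < (2 * ((M : ℝ) - i + 1) - 1) * (2 * ((M : ℝ) - i + 1) - 3) := by
    have h1 : 2 * ((M:ℝ) - i + 1) - 1 = c + 1 := by simp [hc]; ring
    have h2 : 2 * ((M:ℝ) - i + 1) - 3 = c - 1 := by simp [hc]; ring
    rw [h1, h2]; nlinarith
  have hg2 : (γi i) ^ 2 * ((c + 1) * (c - 1)) = lamb := by
    rw [hγi i, Real.sq_sqrt (div_nonneg hlamb0 hD.le)]
    have h1 : (2 * ((M:ℝ) - i + 1) - 1) * (2 * ((M:ℝ) - i + 1) - 3) = (c + 1) * (c - 1) := by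
      simp only [hc]; ring
    rw [h1]
    exact div_mul_cancel₀ lamb (by nlinarith : (c + 1) * (c - 1) ≠ 0)
  have key : Real.exp (-(γi i) ^ 2)
      = ((1 - p) / (p / (2 * M))) * Real.exp (-(c * γi i) ^ 2) := by
    rw [← hexp, ← Real.exp_add]
    congr 1
    nlinarith [hg2]
  have heq : (((i : ℝ) - 1) / M) * p * Real.exp (-(γi i) ^ 2)
      + (1 - p) * (2 * (M : ℝ) - 2 * i + 1) * Real.exp (-(c * γi i) ^ 2)
      = ((i : ℝ) / M) * p * Real.exp (-(γi i) ^ 2)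
      + (1 - p) * (2 * (M : ℝ) - 2 * i - 1) * Real.exp (-(c * γi i) ^ 2) := by
    rw [key]
    field_simp
    ring
  exact ⟨heq, fun _ => key, fun _ => heq⟩
end

section
/- Let R be an n×n real upper triangular matrix with positive diagonal, and suppose for some k the columns k−1 and k are interchanged and the matrix re-triangularized by a Givens rotation, producing R̂ = Gᵀ R P upper triangular with positive diagonal. Then r̂_{k−1,k−1}² = r_{k−1,k}² + r_{kk}², r̂_{k−1,k}² + r̂_{kk}² = r_{k−1,k−1}², and r̂_{k−1,k−1}·r̂_{kk} = r_{k−1,k−1}·r_{kk}. -/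
open Matrix

/-- Effect of a column interchange of two adjacent columns `k-1`, `k` (here `a`, `b`)
followed by re-triangularization with a Givens rotation. -/
theorem stmt_14 (n : ℕ) (R G Rh : Matrix (Fin n) (Fin n) ℝ)
    (a b : Fin n) (hab : (a : ℕ) + 1 = (b : ℕ))
    (hRtri : ∀ i j : Fin n, j < i → R i j = 0)
    (hRdiag : ∀ i : Fin n, 0 < R i i)
    (hG : Gᵀ * G = 1)
    (hGrows : ∀ i j : Fin n, i ≠ a → i ≠ b → G i j = if i = j then 1 else 0)
    (hGcols : ∀ i j : Fin n, j ≠ a → j ≠ b → G i j = if i = j then 1 else 0)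
    (hRh : Rh = Gᵀ * R *
      Matrix.of (fun i j : Fin n => if i = Equiv.swap a b j then (1 : ℝ) else 0))
    (hRhtri : ∀ i j : Fin n, j < i → Rh i j = 0)
    (hRhdiag : ∀ i : Fin n, 0 < Rh i i) :
    Rh a a ^ 2 = R a b ^ 2 + R b b ^ 2 ∧
    Rh a b ^ 2 + Rh b b ^ 2 = R a a ^ 2 ∧
    Rh a a * Rh b b = R a a * R b b := by
  have hne : a ≠ b := by
    intro h; rw [h] at hab; omega
  have hlt : a < b := by
    rw [Fin.lt_def]; omega
  have hRba : R b a = 0 := hRtri b a hlt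
  -- entries of Rh
  have hmul : ∀ i j : Fin n, (i = a ∨ i = b) →
      Rh i j = G a i * R a (Equiv.swap a b j) + G b i * R b (Equiv.swap a b j) := by
    intro i j hi
    rw [hRh]
    simp only [Matrix.mul_apply, Matrix.of_apply, Matrix.transpose_apply, mul_ite,
      mul_one, mul_zero, Finset.sum_ite_eq', Finset.mem_univ, if_pos]
    refine Fintype.sum_eq_add a b hne ?_
    intro m ⟨hma, hmb⟩
    rw [hGrows m i hma hmb]
    rcases hi with h | h <;> subst h <;> simp [hma, hmb]
  -- orthogonality relations
  have hGG : ∀ i j : Fin n, (i = a ∨ i = b) → (j = a ∨ j = b) →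
      G a i * G a j + G b i * G b j = (1 : Matrix (Fin n) (Fin n) ℝ) i j := by
    intro i j hi hj
    rw [← hG]
    simp only [Matrix.mul_apply, Matrix.transpose_apply]
    refine (Fintype.sum_eq_add (f := fun m => G m i * G m j) a b hne ?_).symm
    intro m ⟨hma, hmb⟩
    show G m i * G m j = 0
    rw [hGrows m i hma hmb]
    rcases hi with h | h <;> subst h <;> simp [hma, hmb]
  set c1 := G a a with hc1
  set c2 := G b a with hc2
  set d1 := G a b with hd1
  set d2 := G b b with hd2
  set x := R a b with hx
  set y := R b b with hy
  set p := R a a with hp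
  have e1 : c1 ^ 2 + c2 ^ 2 = 1 := by
    have := hGG a a (Or.inl rfl) (Or.inl rfl)
    simp [Matrix.one_apply] at this
    linear_combination this
  have e2 : d1 ^ 2 + d2 ^ 2 = 1 := by
    have := hGG b b (Or.inr rfl) (Or.inr rfl)
    simp [Matrix.one_apply] at this
    linear_combination this
  have e3 : c1 * d1 + c2 * d2 = 0 := by
    have := hGG a b (Or.inl rfl) (Or.inr rfl)
    simp [Matrix.one_apply, hne] at this
    linear_combination this
  have hsa : Equiv.swap a b a = b := Equiv.swap_apply_left a b
  have hsb : Equiv.swap a b b = a := Equiv.swap_apply_right a b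
  have haa : Rh a a = c1 * x + c2 * y := by rw [hmul a a (Or.inl rfl), hsa]
  have hba0 : d1 * x + d2 * y = 0 := by
    have h := hmul b a (Or.inr rfl)
    rw [hsa, hRhtri b a hlt] at h
    linarith [h.symm]
  have hab' : Rh a b = c1 * p := by
    rw [hmul a b (Or.inl rfl), hsb, hRba]; ring
  have hbb : Rh b b = d1 * p := by
    rw [hmul b b (Or.inr rfl), hsb, hRba]; ring
  have hppos : 0 < p := hRdiag a
  have hypos : 0 < y := hRdiag b
  have hRhaapos : 0 < Rh a a := hRhdiag a
  have hRhbbpos : 0 < Rh b b := hRhdiag b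
  have hd1pos : 0 < d1 := by
    rcases lt_trichotomy d1 0 with h | h | h
    · nlinarith [hbb ▸ hRhbbpos]
    · rw [h] at hbb; simp at hbb; linarith [hbb ▸ hRhbbpos]
    · exact h
  have hdet : (c1 * d2 - c2 * d1) ^ 2 = 1 := by
    linear_combination (d1 ^ 2 + d2 ^ 2) * e1 + e2 - (c1 * d1 + c2 * d2) * e3
  have hq : d1 * (c1 * x + c2 * y) = -(c1 * d2 - c2 * d1) * y := by
    linear_combination c1 * hba0
  have hdetneg : c1 * d2 - c2 * d1 = -1 := by
    have h5 : (c1 * d2 - c2 * d1 - 1) * (c1 * d2 - c2 * d1 + 1) = 0 := by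
      linear_combination hdet
    rcases mul_eq_zero.mp h5 with h | h
    · exfalso
      have h6 : c1 * d2 - c2 * d1 = 1 := by linarith
      rw [h6] at hq
      nlinarith [haa ▸ hRhaapos]
    · linarith
  have f1 : c1 ^ 2 + d1 ^ 2 = 1 := by
    linear_combination (c1 * d1 - c2 * d2) * e3 + d2 ^ 2 * e1 + (1 - c1 ^ 2) * e2
  have hq2 : d1 * (c1 * x + c2 * y) = y := by rw [hq, hdetneg]; ring
  have K : d1 ^ 2 * (c1 * x + c2 * y) ^ 2 = d1 ^ 2 * (x ^ 2 + y ^ 2) := by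
    have h7 : (d1 * (c1 * x + c2 * y)) ^ 2 = y ^ 2 := by rw [hq2]
    have h8 : d1 ^ 2 * x ^ 2 = d2 ^ 2 * y ^ 2 := by
      linear_combination (d1 * x - d2 * y) * hba0
    linear_combination h7 - h8 - y ^ 2 * e2
  refine ⟨?_, ?_, ?_⟩
  · rw [haa]
    have hd1sq : d1 ^ 2 ≠ 0 := pow_ne_zero 2 (ne_of_gt hd1pos)
    exact mul_left_cancel₀ hd1sq K
  · rw [hab', hbb]
    linear_combination p ^ 2 * f1
  · rw [haa, hbb]
    linear_combination p * hq2
end
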